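/- If K^τ ∈ ℝ^{(k+1)×(k+1)} satisfies w^⊤ K^τ w > 0 for all nonzero w, M^τ ∈ ℝ^{(k+1)×(k+1)} is symmetric positive definite, and M_h, A_h ∈ ℝ^{M×M} are symmetric positive definite, then the velocity block K^τ ⊗ M_h + M^τ ⊗ A_h is invertible. -/

import Mathlib

open Kronecker Matrix

section aux
variable {ι κ : Type*} [Fintype ι] [Fintype κ] [DecidableEq ι] [DecidableEq κ]

lemma quad_kron_one (A : Matrix ι ι ℝ)
    (hA : ∀ w : ι → ℝ, w ≠ 0 → 0 < w ⬝ᵥ (A *ᵥ w)) :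
    ∀ y : ι × κ → ℝ, y ≠ 0 → 0 < y ⬝ᵥ ((A ⊗ₖ (1 : Matrix κ κ ℝ)) *ᵥ y) := by
  intro y hy
  have key : y ⬝ᵥ ((A ⊗ₖ (1 : Matrix κ κ ℝ)) *ᵥ y)
      = ∑ m : κ, (fun j => y (j, m)) ⬝ᵥ (A *ᵥ fun j => y (j, m)) := by
    simp only [dotProduct, mulVec, kroneckerMap_apply, Matrix.one_apply, Fintype.sum_prod_type,
      mul_ite, ite_mul, mul_zero, zero_mul, mul_one, one_mul, Finset.sum_ite_eq,
      Finset.sum_ite_eq', Finset.mem_univ, if_true]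
    rw [Finset.sum_comm]
  rw [key]
  obtain ⟨⟨i0, m0⟩, h0⟩ : ∃ p, y p ≠ 0 := Function.ne_iff.mp hy
  have hterm : ∀ m : κ, 0 ≤ (fun j => y (j, m)) ⬝ᵥ (A *ᵥ fun j => y (j, m)) := by
    intro m
    by_cases h : (fun j => y (j, m)) = 0
    · rw [h]; simp
    · exact le_of_lt (hA _ h)
  have hpos : 0 < (fun j => y (j, m0)) ⬝ᵥ (A *ᵥ fun j => y (j, m0)) := by
    apply hA
    intro h
    exact h0 (congrFun h i0)
  exact Finset.sum_pos' (fun m _ => hterm m) ⟨m0, Finset.mem_univ _, hpos⟩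

open scoped MatrixOrder in
lemma quad_kron (A : Matrix ι ι ℝ) (B : Matrix κ κ ℝ)
    (hA : ∀ w : ι → ℝ, w ≠ 0 → 0 < w ⬝ᵥ (A *ᵥ w)) (hB : B.PosDef) :
    ∀ x : ι × κ → ℝ, x ≠ 0 → 0 < x ⬝ᵥ ((A ⊗ₖ B) *ᵥ x) := by
  intro x hx
  set C := CFC.sqrt B with hC
  have hCsymm : Cᵀ = C := (CFC.sqrt_nonneg B).posSemidef.isHermitian
  have hCC : C * C = B := CFC.sqrt_mul_sqrt_self B hB.posSemidef.nonneg
  have hdetC : IsUnit C.det := by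
    have : C.det * C.det = B.det := by rw [← det_mul, hCC]
    have hB0 : B.det ≠ 0 := ne_of_gt hB.det_pos
    exact isUnit_iff_ne_zero.mpr (fun h => hB0 (by rw [← this, h, mul_zero]))
  set y : ι × κ → ℝ := ((1 : Matrix ι ι ℝ) ⊗ₖ C) *ᵥ x with hy
  have hfact : (A ⊗ₖ B) = ((1 : Matrix ι ι ℝ) ⊗ₖ C) * ((A ⊗ₖ (1 : Matrix κ κ ℝ)) * ((1 : Matrix ι ι ℝ) ⊗ₖ C)) := by
    rw [← mul_kronecker_mul, ← mul_kronecker_mul]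
    simp [hCC]
  have hyne : y ≠ 0 := by
    intro h
    have hunit : IsUnit ((1 : Matrix ι ι ℝ) ⊗ₖ C) := by
      rw [Matrix.isUnit_iff_isUnit_det, det_kronecker, det_one, one_pow, one_mul]
      exact hdetC.pow _
    haveI := hunit.invertible
    have hinj := Matrix.mulVec_injective_of_invertible ((1 : Matrix ι ι ℝ) ⊗ₖ C)
    have : ((1 : Matrix ι ι ℝ) ⊗ₖ C) *ᵥ x = ((1 : Matrix ι ι ℝ) ⊗ₖ C) *ᵥ 0 := by
      simpa [← hy] using h
    exact hx (hinj this)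
  have : x ⬝ᵥ ((A ⊗ₖ B) *ᵥ x) = y ⬝ᵥ ((A ⊗ₖ (1 : Matrix κ κ ℝ)) *ᵥ y) := by
    rw [hfact, ← mulVec_mulVec, dotProduct_mulVec x, ← mulVec_transpose]
    have : ((1 : Matrix ι ι ℝ) ⊗ₖ C)ᵀ = (1 : Matrix ι ι ℝ) ⊗ₖ C := by
      rw [← kroneckerMap_transpose, transpose_one, hCsymm]
    rw [this, ← hy, ← mulVec_mulVec]
  rw [this]
  exact quad_kron_one A hA y hyne
end aux

/-- If Kτ is positive definite in the sense wᵀ Kτ w > 0 for w ≠ 0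
(not necessarily symmetric), and Mτ, M_h, A_h are symmetric positive definite, then the
velocity block Kτ ⊗ M_h + Mτ ⊗ A_h is invertible. -/
theorem velocity_block_invertible
    (k M : ℕ)
    (Kτ Mτ : Matrix (Fin (k + 1)) (Fin (k + 1)) ℝ)
    (Mh Ah : Matrix (Fin M) (Fin M) ℝ)
    (hK : ∀ w : Fin (k + 1) → ℝ, w ≠ 0 → 0 < w ⬝ᵥ (Kτ *ᵥ w))
    (hMτ : Mτ.PosDef) (hMh : Mh.PosDef) (hAh : Ah.PosDef) :
    IsUnit (Kτ ⊗ₖ Mh + Mτ ⊗ₖ Ah).det := by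
  have hMτ' : ∀ w : Fin (k + 1) → ℝ, w ≠ 0 → 0 < w ⬝ᵥ (Mτ *ᵥ w) := by
    intro w hw
    simpa using hMτ.dotProduct_mulVec_pos hw
  have hquad : ∀ x : (Fin (k+1)) × (Fin M) → ℝ, x ≠ 0 →
      0 < x ⬝ᵥ ((Kτ ⊗ₖ Mh + Mτ ⊗ₖ Ah) *ᵥ x) := by
    intro x hx
    rw [add_mulVec, dotProduct_add]
    exact add_pos (quad_kron Kτ Mh hK hMh x hx) (quad_kron Mτ Ah hMτ' hAh x hx)
  rw [← Matrix.isUnit_iff_isUnit_det, ← Matrix.mulVec_injective_iff_isUnit]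
  intro a b hab
  by_contra hne
  have h : (Kτ ⊗ₖ Mh + Mτ ⊗ₖ Ah) *ᵥ (a - b) = 0 := by
    rw [mulVec_sub, hab, sub_self]
  have := hquad (a - b) (sub_ne_zero.mpr hne)
  rw [h] at this
  simp at this
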